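/- Let D ⊆ ℝ be nonempty with finite supremum s_D, T : ℝⁿ → ℝ, x ∈ Dⁿ, and φ := sup_{z ∈ S_{D,T}(x)} z_{(1)}, and suppose φ < s_D. Let U = (U_1,…,U_n) be i.i.d. Uniform(0,1) and M := b_{D,T}(x,U) with CDF F_M. Then for all c₁, c₂ with φ ≤ c₁ < c₂ ≤ s_D: F_M(c₂) − F_M(c₁) ≥ ( (c₂ − c₁)/(s_D − φ) )ⁿ > 0; in particular F_M is strictly increasing on [φ, s_D]. -/

import Mathlib

open MeasureTheory Set

/-- The sorted rearrangement (order statistics) of a finite real vector: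
`sortedVec x i` is the (i+1)-st order statistic `x_{(i+1)}` (0-indexed). -/
noncomputable def sortedVec {n : ℕ} (x : Fin n → ℝ) : Fin n → ℝ :=
  x ∘ ⇑(Tuple.sort x)

/-- The induced mean `m(x, ℓ) = s - ∑ ℓ_{(i)} (x_{(i+1)} - x_{(i)})`, with `x_{(n+1)} := s`. -/
noncomputable def inducedMean {n : ℕ} (s : ℝ) (x ℓ : Fin n → ℝ) : ℝ :=
  s - ∑ i : Fin n, sortedVec ℓ i * ((Fin.snoc (sortedVec x) s : Fin (n+1) → ℝ) i.succ - sortedVec x i)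

/-- `S_{D,T}(x) = {y ∈ Dⁿ : T y ≤ T x}`. -/
def SsetD {n : ℕ} (D : Set ℝ) (T : (Fin n → ℝ) → ℝ) (x : Fin n → ℝ) : Set (Fin n → ℝ) :=
  {y | (∀ i, y i ∈ D) ∧ T y ≤ T x}

/-- `b_{D,T}(x, u) = sup_{z ∈ S_{D,T}(x)} m_{sup D}(z, u)`. -/
noncomputable def bfun {n : ℕ} (D : Set ℝ) (T : (Fin n → ℝ) → ℝ) (x u : Fin n → ℝ) : ℝ :=
  sSup ((fun z => inducedMean (sSup D) z u) '' SsetD D T x)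

/-- The uniform probability measure on `[0,1]`. -/
noncomputable def unif01 : Measure ℝ := volume.restrict (Icc (0:ℝ) 1)

/-- The law of an i.i.d. sample of size `n` from Uniform(0,1). -/
noncomputable def unifPi (n : ℕ) : Measure (Fin n → ℝ) := Measure.pi fun _ => unif01

/-- The `p`-quantile of the random variable `Y` under `μ`:
`Q(p, Y) = inf {y : P(Y ≤ y) ≥ p}`. -/
noncomputable def rquantile {Ω : Type*} [MeasurableSpace Ω] (μ : Measure Ω)
    (Y : Ω → ℝ) (p : ℝ) : ℝ :=
  sInf {y : ℝ | ENNReal.ofReal p ≤ μ {ω | Y ω ≤ y}}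

/-- The upper confidence bound `b^α_{D,T}(x) = Q(1 - α, b_{D,T}(x, U))`, `U` i.i.d. Uniform(0,1). -/
noncomputable def ucb {n : ℕ} (D : Set ℝ) (T : (Fin n → ℝ) → ℝ) (α : ℝ)
    (x : Fin n → ℝ) : ℝ :=
  rquantile (unifPi n) (bfun D T x) (1 - α)

/-- The stairstep function `G_{x,ℓ}` with top value at `s`. -/
noncomputable def stairstep {n : ℕ} (s : ℝ) (x ℓ : Fin n → ℝ) (t : ℝ) : ℝ :=
  if s ≤ t then 1 else sSup ({0} ∪ (sortedVec ℓ '' {i | sortedVec x i ≤ t}))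

/-- The `k`-th smallest value (1-indexed) among `m 0, …, m (L-1)`. -/
noncomputable def kthSmallest {L : ℕ} (m : Fin L → ℝ) (k : ℕ) : ℝ :=
  sInf {y : ℝ | k ≤ Nat.card {j : Fin L // m j ≤ y}}

/-!
On the box `[t₂, t₁)ⁿ` with `tₖ = (sup D - cₖ) / (sup D - φ)`, the bound `b_{D,T}(x, u)` lies in
`(c₁, c₂]`. Indeed, the spacings of any `z ∈ S_{D,T}(x)` (with `z_{(n+1)} = sup D`) are
nonnegative and sum to `sup D - z_{(1)}`, so `m(z, u)` lies between `sup D - (max u) (sup D - z_{(1)})`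
and `sup D - (min u) (sup D - z_{(1)})`; taking the supremum over `z` turns `z_{(1)}` into `φ`.
The box has uniform measure `(t₁ - t₂)ⁿ = ((c₂ - c₁) / (sup D - φ))ⁿ`.
-/

theorem Fin.sum_succ_sub_castSucc {M : Type*} [AddCommGroup M] {n : ℕ} (g : Fin (n + 1) → M) :
    ∑ i : Fin n, (g i.succ - g i.castSucc) = g (Fin.last n) - g 0 := by
  induction n with
  | zero => simp
  | succ n ih =>
    rw [Fin.sum_univ_castSucc]
    simp only [Fin.succ_castSucc]
    rw [ih fun i => g i.castSucc, Fin.castSucc_zero, Fin.succ_last]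
    abel

section Spacing

variable {n : ℕ}

/-- The spacing `z_{(i+2)} - z_{(i+1)}` of the order statistics, with `z_{(n+1)} := s`. -/
noncomputable def spacing (s : ℝ) (z : Fin n → ℝ) (i : Fin n) : ℝ :=
  (Fin.snoc (sortedVec z) s : Fin (n + 1) → ℝ) i.succ - sortedVec z i

theorem inducedMean_eq (s : ℝ) (z ℓ : Fin n → ℝ) :
    inducedMean s z ℓ = s - ∑ i, sortedVec ℓ i * spacing s z i := rfl

theorem spacing_nonneg {s : ℝ} {z : Fin n → ℝ} (hz : ∀ i, z i ≤ s) (i : Fin n) :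
    0 ≤ spacing s z i := by
  rw [spacing, sub_nonneg]
  rcases Fin.eq_castSucc_or_eq_last i.succ with ⟨j, hj⟩ | hlast
  · rw [hj, Fin.snoc_castSucc]
    refine Tuple.monotone_sort z (Fin.le_def.mpr ?_)
    have := congrArg Fin.val hj
    simp only [Fin.val_succ, Fin.val_castSucc] at this
    omega
  · rw [hlast, Fin.snoc_last]
    exact hz _

theorem sum_spacing (hn : 0 < n) (s : ℝ) (z : Fin n → ℝ) :
    ∑ i, spacing s z i = s - sortedVec z ⟨0, hn⟩ := by
  have h := Fin.sum_succ_sub_castSucc (Fin.snoc (sortedVec z) s : Fin (n + 1) → ℝ)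
  rw [show (0 : Fin (n + 1)) = Fin.castSucc ⟨0, hn⟩ from rfl] at h
  simp only [Fin.snoc_castSucc, Fin.snoc_last] at h
  exact h

theorem inducedMean_le (hn : 0 < n) {s a : ℝ} {z ℓ : Fin n → ℝ} (hz : ∀ i, z i ≤ s)
    (hℓ : ∀ i, a ≤ ℓ i) : inducedMean s z ℓ ≤ s - a * (s - sortedVec z ⟨0, hn⟩) := by
  rw [inducedMean_eq, ← sum_spacing hn, Finset.mul_sum]
  exact sub_le_sub_left
    (Finset.sum_le_sum fun i _ => mul_le_mul_of_nonneg_right (hℓ _) (spacing_nonneg hz i)) s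

theorem le_inducedMean (hn : 0 < n) {s b : ℝ} {z ℓ : Fin n → ℝ} (hz : ∀ i, z i ≤ s)
    (hℓ : ∀ i, ℓ i ≤ b) : s - b * (s - sortedVec z ⟨0, hn⟩) ≤ inducedMean s z ℓ := by
  rw [inducedMean_eq, ← sum_spacing hn, Finset.mul_sum]
  exact sub_le_sub_left
    (Finset.sum_le_sum fun i _ => mul_le_mul_of_nonneg_right (hℓ _) (spacing_nonneg hz i)) s

end Spacing

section Bfun

variable {n : ℕ} (hn : 0 < n) {D : Set ℝ} {T : (Fin n → ℝ) → ℝ} {x u : Fin n → ℝ} {φ : ℝ}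

theorem bfun_le (hbdd : BddAbove D) (hS : (SsetD D T x).Nonempty)
    (hφ : ∀ z ∈ SsetD D T x, sortedVec z ⟨0, hn⟩ ≤ φ) {a : ℝ} (ha : 0 ≤ a) (hu : ∀ i, a ≤ u i) :
    bfun D T x u ≤ sSup D - a * (sSup D - φ) := by
  refine csSup_le (hS.image _) ?_
  rintro _ ⟨z, hz, rfl⟩
  have hzs : ∀ i, z i ≤ sSup D := fun i => le_csSup hbdd (hz.1 i)
  calc inducedMean (sSup D) z u ≤ sSup D - a * (sSup D - sortedVec z ⟨0, hn⟩) :=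
        inducedMean_le hn hzs hu
    _ ≤ sSup D - a * (sSup D - φ) := by gcongr; exact hφ z hz

theorem le_bfun (hbdd : BddAbove D) (hS : (SsetD D T x).Nonempty)
    (hφ : IsLUB ((fun z => sortedVec z ⟨0, hn⟩) '' SsetD D T x) φ) {b : ℝ}
    (hu : ∀ i, u i ∈ Icc 0 b) : sSup D - b * (sSup D - φ) ≤ bfun D T x u := by
  have hzs : ∀ z ∈ SsetD D T x, ∀ i, z i ≤ sSup D := fun z hz i => le_csSup hbdd (hz.1 i)
  have hbdd_mean : BddAbove ((fun z => inducedMean (sSup D) z u) '' SsetD D T x) := by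
    refine ⟨sSup D, ?_⟩
    rintro _ ⟨z, hz, rfl⟩
    simpa using inducedMean_le hn (hzs z hz) (fun i => (hu i).1)
  have hclosed : IsClosed {y : ℝ | sSup D - b * (sSup D - y) ≤ bfun D T x u} :=
    isClosed_le (by fun_prop) continuous_const
  -- `φ` lies in the closure of the first order statistics, and the bound is closed in `z_{(1)}`.
  refine hclosed.closure_subset_iff.mpr ?_ (hφ.mem_closure (hS.image _))
  rintro _ ⟨z, hz, rfl⟩
  exact (le_inducedMean hn (hzs z hz) fun i => (hu i).2).trans
    (le_csSup hbdd_mean ⟨z, hz, rfl⟩)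

end Bfun

instance : IsProbabilityMeasure unif01 :=
  ⟨by rw [unif01, Measure.restrict_apply_univ, Real.volume_Icc]; simp⟩

instance (n : ℕ) : IsProbabilityMeasure (unifPi n) := by
  rw [unifPi]; infer_instance

theorem unifPi_univ_pi_Ico (n : ℕ) {a b : ℝ} (ha : 0 ≤ a) (hab : a ≤ b) (hb : b ≤ 1) :
    (unifPi n (univ.pi fun _ => Ico a b)).toReal = (b - a) ^ n := by
  have hIco : Ico a b ∩ Icc 0 1 = Ico a b :=
    inter_eq_left.mpr fun y hy => ⟨ha.trans hy.1, hy.2.le.trans hb⟩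
  simp only [unifPi, Measure.pi_pi, unif01, Measure.restrict_apply measurableSet_Ico, hIco,
    Real.volume_Ico, Finset.prod_const, Finset.card_univ, Fintype.card_fin, ENNReal.toReal_pow,
    ENNReal.toReal_ofReal (sub_nonneg.mpr hab)]

theorem measureReal_le_sub_of_disjoint {α : Type*} [MeasurableSpace α] {μ : Measure α}
    [IsFiniteMeasure μ] {A₁ A₂ E : Set α} (hE : MeasurableSet E) (hA : A₁ ⊆ A₂) (hEA : E ⊆ A₂)
    (hd : Disjoint A₁ E) : μ.real E ≤ μ.real A₂ - μ.real A₁ := by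
  have := measureReal_mono (μ := μ) (union_subset hA hEA)
  rw [measureReal_union hd hE] at this
  linarith

theorem stmt15_general {n : ℕ} (hn : 0 < n) (D : Set ℝ) (hbdd : BddAbove D)
    (T : (Fin n → ℝ) → ℝ) (x : Fin n → ℝ) (hx : ∀ i, x i ∈ D)
    (φ : ℝ) (hφdef : φ = sSup ((fun z => sortedVec z ⟨0, hn⟩) '' SsetD D T x))
    (hφ : φ < sSup D) :
    ∀ c₁ c₂ : ℝ, φ ≤ c₁ → c₁ < c₂ → c₂ ≤ sSup D →
      ((c₂ - c₁) / (sSup D - φ)) ^ n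
          ≤ (unifPi n {u | bfun D T x u ≤ c₂}).toReal
            - (unifPi n {u | bfun D T x u ≤ c₁}).toReal ∧
      0 < ((c₂ - c₁) / (sSup D - φ)) ^ n := by
  intro c₁ c₂ hc₁ hlt hc₂
  have : Nonempty (Fin n) := Fin.pos_iff_nonempty.mp hn
  set s := sSup D
  have hsφ : 0 < s - φ := sub_pos.mpr hφ
  have hS : (SsetD D T x).Nonempty := ⟨x, hx, le_rfl⟩
  have hφlub : IsLUB ((fun z => sortedVec z ⟨0, hn⟩) '' SsetD D T x) φ :=
    hφdef ▸ isLUB_csSup (hS.image _) ⟨s, by rintro _ ⟨z, hz, rfl⟩; exact le_csSup hbdd (hz.1 _)⟩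
  set t₁ := (s - c₁) / (s - φ)
  set t₂ := (s - c₂) / (s - φ)
  have hc₁_eq : s - t₁ * (s - φ) = c₁ := by rw [div_mul_cancel₀ _ hsφ.ne']; ring
  have hc₂_eq : s - t₂ * (s - φ) = c₂ := by rw [div_mul_cancel₀ _ hsφ.ne']; ring
  have ht₂ : 0 ≤ t₂ := div_nonneg (sub_nonneg.mpr hc₂) hsφ.le
  have ht : t₂ < t₁ := div_lt_div_of_pos_right (by linarith) hsφ
  have ht₁ : t₁ ≤ 1 := (div_le_one hsφ).mpr (by linarith)
  set E : Set (Fin n → ℝ) := univ.pi fun _ => Ico t₂ t₁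
  have hE₂ : E ⊆ {u | bfun D T x u ≤ c₂} := fun u hu =>
    hc₂_eq ▸ bfun_le hn hbdd hS (fun z hz => hφlub.1 ⟨z, hz, rfl⟩) ht₂ fun i => (hu i trivial).1
  have hE₁ : Disjoint {u | bfun D T x u ≤ c₁} E := by
    refine disjoint_right.mpr fun u hu (hle : bfun D T x u ≤ c₁) => ?_
    obtain ⟨i₀, hi₀⟩ := Finite.exists_max u
    have hb := le_bfun hn hbdd hS hφlub fun i => ⟨ht₂.trans (hu i trivial).1, hi₀ i⟩
    have : u i₀ * (s - φ) < t₁ * (s - φ) := by gcongr; exact (hu i₀ trivial).2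
    linarith
  refine ⟨?_, pow_pos (div_pos (sub_pos.mpr hlt) hsφ) n⟩
  calc ((c₂ - c₁) / (s - φ)) ^ n = (t₁ - t₂) ^ n := by
        congr 1; rw [div_eq_iff hsφ.ne']; linarith
    _ = (unifPi n E).toReal := (unifPi_univ_pi_Ico n ht₂ ht.le ht₁).symm
    _ ≤ _ := measureReal_le_sub_of_disjoint (MeasurableSet.univ_pi fun _ => measurableSet_Ico)
        (fun u hu => le_trans hu hlt.le) hE₂ hE₁

/-- if `φ = sup_{z ∈ S_{D,T}(x)} z_{(1)} < sup D`, then the CDF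
`F_M` of `M = b_{D,T}(x, U)` (over `U` i.i.d. Uniform(0,1)) satisfies, for all
`φ ≤ c₁ < c₂ ≤ sup D`, `F_M(c₂) - F_M(c₁) ≥ ((c₂-c₁)/(sup D - φ))ⁿ > 0`. -/
theorem stmt15 {n : ℕ} (hn : 0 < n) (D : Set ℝ) (hD : D.Nonempty) (hbdd : BddAbove D)
    (T : (Fin n → ℝ) → ℝ) (x : Fin n → ℝ) (hx : ∀ i, x i ∈ D)
    (φ : ℝ) (hφdef : φ = sSup ((fun z => sortedVec z ⟨0, hn⟩) '' SsetD D T x))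
    (hφ : φ < sSup D) :
    ∀ c₁ c₂ : ℝ, φ ≤ c₁ → c₁ < c₂ → c₂ ≤ sSup D →
      ((c₂ - c₁) / (sSup D - φ)) ^ n
          ≤ (unifPi n {u | bfun D T x u ≤ c₂}).toReal
            - (unifPi n {u | bfun D T x u ≤ c₁}).toReal ∧
      0 < ((c₂ - c₁) / (sSup D - φ)) ^ n :=
  stmt15_general hn D hbdd T x hx φ hφdef hφ
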